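/- arXiv:math/0607778 — 2 statements merged into one kernel-verified Lean document; each statement's English description precedes it below -/
import Mathlib

section
/- Let W be a word over {a,b,c,d} representing an element g of the Grigorchuk group G. Then N^{1,0}_{b,c}(W) ≡ β_00(g) modulo 2. -/
/-!
We model the group `Aut(T)` of automorphisms of the binary rooted tree via portraits:
an automorphism is uniquely determined by the function `List Bool → Bool` recording,
for every vertex `u` (a finite binary word, `false = 0`, `true = 1`), whether the
automorphism is active (i.e. swaps the two subtrees) at `u`.  Under this identification
`α_u(g) = g u`, the section of `g` at `u` is `fun v => g (u ++ v)`, and the group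
operation corresponds to composition of tree automorphisms.
-/

/-- Automorphisms of the binary rooted tree, encoded by their portraits. -/
def AutT : Type := List Bool → Bool

namespace AutT

/-- The section of a tree automorphism at a first-level vertex. -/
def sec (g : AutT) (x : Bool) : AutT := fun u => g (x :: u)

/-- The section of a tree automorphism at an arbitrary vertex `u`. -/
def secAt (g : AutT) (u : List Bool) : AutT := fun v => g (u ++ v)

/-- The activity (decoration of the portrait) of `g` at the vertex `u`:
`α_u(g) = 1` iff `g` is active at `u`. -/
def alpha (g : AutT) (u : List Bool) : Bool := g u

/-- The action of a tree automorphism on the vertices of the tree. -/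
def act : AutT → List Bool → List Bool
  | _, [] => []
  | g, x :: u => (xor (g []) x) :: act (sec g x) u

/-- Auxiliary function defining the product of two tree automorphisms
(`g * h` acts as `g` followed by `h`). -/
def mulAux : List Bool → AutT → AutT → Bool
  | [], g, h => xor (g []) (h [])
  | x :: u, g, h => mulAux u (sec g x) (sec h (xor x (g [])))

instance : Mul AutT := ⟨fun g h u => mulAux u g h⟩

/-- Auxiliary function defining the inverse of a tree automorphism. -/
def invAux : List Bool → AutT → Bool
  | [], g => g []
  | x :: u, g => invAux u (sec g (xor x (g [])))

instance : One AutT := ⟨fun _ => false⟩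
instance : Inv AutT := ⟨fun g u => invAux u g⟩

lemma one_apply (u : List Bool) : (1 : AutT) u = false := rfl

lemma mul_apply_nil (g h : AutT) : (g * h) [] = xor (g []) (h []) := rfl

lemma mul_apply_cons (g h : AutT) (x : Bool) (u : List Bool) :
    (g * h) (x :: u) = (sec g x * sec h (xor x (g []))) u := rfl

lemma sec_mul (g h : AutT) (x : Bool) :
    sec (g * h) x = sec g x * sec h (xor x (g [])) := rfl

lemma sec_one (x : Bool) : sec (1 : AutT) x = 1 := rfl

lemma inv_apply_nil (g : AutT) : (g⁻¹ : AutT) [] = g [] := rfl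

lemma sec_inv (g : AutT) (x : Bool) :
    sec (g⁻¹ : AutT) x = (sec g (xor x (g [])))⁻¹ := rfl

private lemma mul_assoc' (g h k : AutT) : g * h * k = g * (h * k) := by
  funext u
  induction u generalizing g h k with
  | nil => simp [mul_apply_nil, Bool.xor_assoc]
  | cons x u ih =>
      rw [mul_apply_cons, mul_apply_cons, sec_mul, mul_apply_nil, sec_mul, ih,
        Bool.xor_assoc]

private lemma one_mul' (g : AutT) : 1 * g = g := by
  funext u
  induction u generalizing g with
  | nil => simp [mul_apply_nil, one_apply]
  | cons x u ih => rw [mul_apply_cons, sec_one, one_apply, Bool.xor_false, ih]; rfl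

private lemma inv_mul_cancel' (g : AutT) : g⁻¹ * g = 1 := by
  funext u
  induction u generalizing g with
  | nil => simp [mul_apply_nil, inv_apply_nil, one_apply]
  | cons x u ih =>
      rw [mul_apply_cons, inv_apply_nil, sec_inv, ih]; rfl

instance : Group AutT :=
  Group.ofLeftAxioms mul_assoc' one_mul' inv_mul_cancel'

/-- The generator `a = (1,1)σ` of the Grigorchuk group. -/
def genA : AutT := fun u => decide (u = [])

/-- The generators `b`, `c`, `d` of the Grigorchuk group, defined simultaneously:
`bcdAux 0 = b = (a, c)`, `bcdAux 1 = c = (a, d)`, `bcdAux 2 = d = (1, b)`. -/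
def bcdAux : Fin 3 → List Bool → Bool
  | _, [] => false
  | i, false :: u => if i.val = 2 then false else decide (u = [])
  | i, true :: u => bcdAux (i + 1) u

/-- The generator `b = (a, c)` of the Grigorchuk group. -/
def genB : AutT := bcdAux 0

/-- The generator `c = (a, d)` of the Grigorchuk group. -/
def genC : AutT := bcdAux 1

/-- The generator `d = (1, b)` of the Grigorchuk group. -/
def genD : AutT := bcdAux 2

/-- The Grigorchuk group, as a subgroup of the group of binary rooted tree
automorphisms. -/
def Grigorchuk : Subgroup AutT := Subgroup.closure {genA, genB, genC, genD}

/-- `β_{xy}(g) = α_{xy}(g) + α_{x ȳ 0}(g) + α_{x ȳ 1}(g)` (mod 2). -/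
def beta (g : AutT) (x y : Bool) : Bool :=
  xor (g [x, y]) (xor (g [x, !y, false]) (g [x, !y, true]))

end AutT
/-!
Words over the alphabet `{a, b, c, d}`, encoded as lists over `Fin 4`
(`0 = a`, `1 = b`, `2 = c`, `3 = d`).
-/

/-- Is the letter one of the `{b,c}`-letters? -/
def isBC (x : Fin 4) : Bool := decide (x = 1 ∨ x = 2)

/-- The parity (number modulo 2) of occurrences of the letter `a` before position `i`
in the word `W`. -/
def aParity (W : List (Fin 4)) (i : ℕ) : ℕ := (W.take i).count 0 % 2

/-- The number of `{b,c}`-letters of parity `p` occurring before position `i` in `W`. -/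
def NbcBefore (W : List (Fin 4)) (p : ℕ) (i : ℕ) : ℕ :=
  ((Finset.range i).filter fun j => isBC (W.getD j 0) = true ∧ aParity W j = p).card

/-- `N^p_{b,c}(W)`: the number of `{b,c}`-letters of parity `p` in `W`. -/
def Nbc (W : List (Fin 4)) (p : ℕ) : ℕ := NbcBefore W p W.length

/-- `N^{p,q}_{b,c}(W)`: the number of `{b,c}`-letters `ℓ` of parity `p` in `W` such that
the number of `{b,c}`-letters of parity `p̄` appearing before `ℓ` in `W` has parity `q`. -/
def Nbc2 (W : List (Fin 4)) (p q : ℕ) : ℕ :=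
  ((Finset.range W.length).filter fun i =>
    isBC (W.getD i 0) = true ∧ aParity W i = p ∧ NbcBefore W (1 - p) i % 2 = q).card
namespace AutT

/-- The letters `a`, `b`, `c`, `d` as tree automorphisms. -/
def gen : Fin 4 → AutT := ![genA, genB, genC, genD]

end AutT

open AutT

namespace AutT

lemma mul_apply₂' (g h : AutT) (x y : Bool) :
    (g * h) [x, y] = xor (g [x, y]) (h [xor x (g []), xor y (g [x])]) := rfl

lemma mul_apply₃' (g h : AutT) (x y z : Bool) :
    (g * h) [x, y, z] =
      xor (g [x, y, z]) (h [xor x (g []), xor y (g [x]), xor z (g [x, y])]) := rfl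

lemma mul_apply₁' (g h : AutT) (x : Bool) :
    (g * h) [x] = xor (g [x]) (h [xor x (g [])]) := rfl

lemma beta_mul_gen (g : AutT) (l : Fin 4) :
    beta (g * gen l) false false =
      xor (beta g false false)
        (decide (isBC l = true ∧ g [] = true ∧ g [false] = false)) := by
  simp only [beta, mul_apply₂', mul_apply₃', Bool.false_xor, Bool.true_xor, Bool.not_false]
  generalize g [false, true, false] = p
  generalize g [false, true, true] = q
  generalize g [false, false] = r
  generalize g [false, true] = c
  generalize g [false] = b
  generalize g [] = a
  revert a b c p q r
  fin_cases l <;> decide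

end AutT

open AutT

lemma aParity_append (W : List (Fin 4)) (l : Fin 4) (j : ℕ) (hj : j ≤ W.length) :
    aParity (W ++ [l]) j = aParity W j := by
  unfold aParity
  rw [List.take_append_of_le_length hj]

lemma NbcBefore_append (W : List (Fin 4)) (l : Fin 4) (p i : ℕ) (hi : i ≤ W.length) :
    NbcBefore (W ++ [l]) p i = NbcBefore W p i := by
  unfold NbcBefore
  congr 1
  apply Finset.filter_congr
  intro j hj
  have hj' : j < W.length := lt_of_lt_of_le (Finset.mem_range.mp hj) hi
  rw [List.getD_append _ _ _ _ hj', aParity_append _ _ _ hj'.le]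

lemma Nbc2_append (W : List (Fin 4)) (l : Fin 4) :
    Nbc2 (W ++ [l]) 1 0 = Nbc2 W 1 0 +
      (if isBC l = true ∧ aParity W W.length = 1 ∧ NbcBefore W 0 W.length % 2 = 0
        then 1 else 0) := by
  classical
  unfold Nbc2
  rw [List.length_append, List.length_singleton, Finset.range_add_one, Finset.filter_insert]
  have hg : (W ++ [l]).getD W.length 0 = l := by
    rw [List.getD_append_right _ _ _ _ le_rfl, Nat.sub_self]; rfl
  have hcongr : ∀ j ∈ Finset.range W.length,
      ((isBC ((W ++ [l]).getD j 0) = true ∧ aParity (W ++ [l]) j = 1 ∧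
          NbcBefore (W ++ [l]) (1 - 1) j % 2 = 0) ↔
        (isBC (W.getD j 0) = true ∧ aParity W j = 1 ∧ NbcBefore W (1 - 1) j % 2 = 0)) := by
    intro j hj
    have hj' : j < W.length := Finset.mem_range.mp hj
    rw [List.getD_append _ _ _ _ hj', aParity_append _ _ _ hj'.le,
      NbcBefore_append _ _ _ _ hj'.le]
  rw [Finset.filter_congr hcongr, hg, aParity_append _ _ _ le_rfl,
    NbcBefore_append _ _ _ _ le_rfl]
  have h00 : (1 - 1 : ℕ) = 0 := rfl
  rw [h00]
  split_ifs with h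
  · rw [Finset.card_insert_of_notMem (by simp), add_comm]
  · rfl

lemma Nbc_append (W : List (Fin 4)) (l : Fin 4) :
    Nbc (W ++ [l]) 0 = Nbc W 0 +
      (if isBC l = true ∧ aParity W W.length = 0 then 1 else 0) := by
  classical
  unfold Nbc NbcBefore
  rw [List.length_append, List.length_singleton, Finset.range_add_one, Finset.filter_insert]
  have hg : (W ++ [l]).getD W.length 0 = l := by
    rw [List.getD_append_right _ _ _ _ le_rfl, Nat.sub_self]; rfl
  have hcongr : ∀ j ∈ Finset.range W.length,
      ((isBC ((W ++ [l]).getD j 0) = true ∧ aParity (W ++ [l]) j = 0) ↔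
        (isBC (W.getD j 0) = true ∧ aParity W j = 0)) := by
    intro j hj
    have hj' : j < W.length := Finset.mem_range.mp hj
    rw [List.getD_append _ _ _ _ hj', aParity_append _ _ _ hj'.le]
  rw [Finset.filter_congr hcongr, hg, aParity_append _ _ _ le_rfl]
  split_ifs with h
  · rw [Finset.card_insert_of_notMem (by simp), add_comm]
  · rfl

lemma parity_add_one (x : ℕ) : decide ((x + 1) % 2 = 1) = !decide (x % 2 = 1) := by
  rcases Nat.mod_two_eq_zero_or_one x with h | h <;> simp [Nat.add_mod, h]

lemma gen_nil (l : Fin 4) : gen l [] = decide (l = 0) := by fin_cases l <;> rfl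

lemma gen_singleton (l : Fin 4) (x : Bool) : gen l [x] = (!x && isBC l) := by
  fin_cases l <;> cases x <;> rfl

lemma aParity_zero_or_one (W : List (Fin 4)) (i : ℕ) : aParity W i = 0 ∨ aParity W i = 1 := by
  unfold aParity; exact Nat.mod_two_eq_zero_or_one _

lemma aParity_full (W : List (Fin 4)) : aParity W W.length = W.count 0 % 2 := by
  unfold aParity; rw [List.take_length]

lemma key (W : List (Fin 4)) :
    ((W.map gen).prod) [] = decide (aParity W W.length = 1) ∧
    ((W.map gen).prod) [false] = decide (Nbc W 0 % 2 = 1) ∧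
    beta ((W.map gen).prod) false false = decide (Nbc2 W 1 0 % 2 = 1) := by
  induction W using List.reverseRecOn with
  | nil =>
      refine ⟨rfl, rfl, ?_⟩
      simp [Nbc2, beta, one_apply]
  | append_singleton W l ih =>
      obtain ⟨h1, h2, h3⟩ := ih
      have hprod : (((W ++ [l]).map gen).prod) = (W.map gen).prod * gen l := by
        simp
      have hcount : (W ++ [l]).count 0 = W.count 0 + if l = 0 then 1 else 0 := by
        simp [List.count_append, List.count_singleton]
      have hap : aParity (W ++ [l]) (W ++ [l]).length =
          (aParity W W.length + if l = 0 then 1 else 0) % 2 := by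
        rw [aParity_full, aParity_full, hcount]; omega
      refine ⟨?_, ?_, ?_⟩
      · rw [hprod, mul_apply_nil, h1, hap]
        rcases aParity_zero_or_one W W.length with h | h <;>
          rcases eq_or_ne l 0 with hl | hl <;> simp [h, hl, gen_nil]
      · rw [hprod, mul_apply₁', Bool.false_xor, h1, h2, gen_singleton, Nbc_append]
        rcases aParity_zero_or_one W W.length with h | h <;>
          cases hbc : isBC l <;>
          rcases Nat.mod_two_eq_zero_or_one (Nbc W 0) with hn | hn <;>
          simp [h, hbc, hn, Nat.add_mod]
      · rw [hprod, beta_mul_gen, h1, h2, h3, Nbc2_append]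
        have hNB : NbcBefore W 0 W.length = Nbc W 0 := rfl
        rw [hNB]
        rcases aParity_zero_or_one W W.length with h | h <;>
          cases hbc : isBC l <;>
          rcases Nat.mod_two_eq_zero_or_one (Nbc W 0) with hn | hn <;>
          rcases Nat.mod_two_eq_zero_or_one (Nbc2 W 1 0) with hm | hm <;>
          simp [h, hbc, hn, hm, Nat.add_mod]

/-- If the word `W` over `{a,b,c,d}` represents the element `g` of the
Grigorchuk group, then `N^{1,0}_{b,c}(W) ≡ β₀₀(g)` modulo 2. -/
theorem Nbc2_one_zero_eq_beta00
    (W : List (Fin 4)) (g : AutT) (hg : g ∈ Grigorchuk)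
    (hW : (W.map gen).prod = g) :
    Nbc2 W 1 0 ≡ (if beta g false false = true then 1 else 0) [MOD 2] := by
  obtain ⟨-, -, h3⟩ := key W
  rw [hW] at h3
  rcases Nat.mod_two_eq_zero_or_one (Nbc2 W 1 0) with h | h <;>
    simp [Nat.ModEq, h3, h]
end

section
/- Let W be a word over the alphabet {a,b,c,d}. If N^1_{b,c}(W) is even, then, modulo 2, N^{0,1}_{b,c}(W) = N^{1,1}_{b,c}(W) = N^{1,0}_{b,c}(W). -/
/-- Positions of `{b,c}`-letters of parity `p`. -/
def bcS (W : List (Fin 4)) (p : ℕ) : Finset ℕ :=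
  (Finset.range W.length).filter fun i => isBC (W.getD i 0) = true ∧ aParity W i = p

lemma NbcBefore_eq_sum (W : List (Fin 4)) (p j : ℕ) (hj : j ≤ W.length) :
    NbcBefore W p j = ∑ i ∈ bcS W p, if i < j then 1 else 0 := by
  rw [← Finset.card_filter]
  unfold NbcBefore bcS
  rw [Finset.filter_filter]
  congr 1
  ext i
  simp only [Finset.mem_filter, Finset.mem_range]
  constructor
  · rintro ⟨hi, h1, h2⟩; exact ⟨lt_of_lt_of_le hi hj, ⟨h1, h2⟩, hi⟩
  · rintro ⟨_, ⟨h1, h2⟩, hi⟩; exact ⟨hi, h1, h2⟩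

lemma Nbc2_one_mod (W : List (Fin 4)) (p : ℕ) :
    Nbc2 W p 1 % 2 = (∑ i ∈ bcS W p, NbcBefore W (1 - p) i) % 2 := by
  have h1 : Nbc2 W p 1 = ∑ i ∈ bcS W p, NbcBefore W (1 - p) i % 2 := by
    unfold Nbc2 bcS
    rw [Finset.card_filter, Finset.sum_filter]
    apply Finset.sum_congr rfl
    intro i _
    by_cases hab : isBC (W.getD i 0) = true ∧ aParity W i = p
    · rw [if_pos hab]
      rcases Nat.mod_two_eq_zero_or_one (NbcBefore W (1 - p) i) with hm | hm
      · rw [hm, if_neg]; rintro ⟨_, _, hc⟩; omega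
      · rw [hm, if_pos ⟨hab.1, hab.2, rfl⟩]
    · rw [if_neg hab, if_neg]
      rintro ⟨h1, h2, _⟩; exact hab ⟨h1, h2⟩
  rw [h1]
  conv_rhs => rw [Finset.sum_nat_mod]


/-- If `N¹_{b,c}(W)` is even then `N^{0,1} = N^{1,1} = N^{1,0}` mod 2. -/
theorem Nbc2_eq_of_even_Nbc_one (W : List (Fin 4)) (h : Nbc W 1 % 2 = 0) :
    Nbc2 W 0 1 % 2 = Nbc2 W 1 1 % 2 ∧ Nbc2 W 1 1 % 2 = Nbc2 W 1 0 % 2 := by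
  have hsplit : Nbc2 W 1 1 + Nbc2 W 1 0 = Nbc W 1 := by
    unfold Nbc2 Nbc NbcBefore
    rw [Finset.card_filter, Finset.card_filter, Finset.card_filter,
      ← Finset.sum_add_distrib]
    apply Finset.sum_congr rfl
    intro i _
    by_cases hab : isBC (W.getD i 0) = true ∧ aParity W i = 1
    · rcases Nat.mod_two_eq_zero_or_one
        (((Finset.range i).filter fun j =>
          isBC (W.getD j 0) = true ∧ aParity W j = 1 - 1).card) with hm | hm
      · rw [hm, if_neg (by rintro ⟨_, _, hc⟩; omega), if_pos ⟨hab.1, hab.2, rfl⟩,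
          if_pos hab]
      · rw [hm, if_pos ⟨hab.1, hab.2, rfl⟩, if_neg (by rintro ⟨_, _, hc⟩; omega),
          if_pos hab]
    · rw [if_neg (by rintro ⟨h1, h2, _⟩; exact hab ⟨h1, h2⟩),
        if_neg (by rintro ⟨h1, h2, _⟩; exact hab ⟨h1, h2⟩), if_neg hab]
  have hA : Nbc2 W 0 1 % 2 = (∑ i ∈ bcS W 0, NbcBefore W 1 i) % 2 := Nbc2_one_mod W 0
  have hB : Nbc2 W 1 1 % 2 = (∑ i ∈ bcS W 1, NbcBefore W 0 i) % 2 := Nbc2_one_mod W 1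
  have hcard1 : (bcS W 1).card = Nbc W 1 := rfl
  have hmem : ∀ i ∈ bcS W 0, ∀ j ∈ bcS W 1, i ≠ j := by
    intro i hi j hj hij
    simp only [bcS, Finset.mem_filter] at hi hj
    subst hij
    omega
  have hle : ∀ p : ℕ, ∀ i ∈ bcS W p, i ≤ W.length := by
    intro p i hi
    simp only [bcS, Finset.mem_filter, Finset.mem_range] at hi
    omega
  have hsum : (∑ i ∈ bcS W 0, NbcBefore W 1 i) + (∑ j ∈ bcS W 1, NbcBefore W 0 j)
      = (bcS W 0).card * (bcS W 1).card := by
    rw [Finset.sum_congr rfl fun i hi => NbcBefore_eq_sum W 1 i (hle 0 i hi),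
      Finset.sum_congr rfl fun j hj => NbcBefore_eq_sum W 0 j (hle 1 j hj),
      show (∑ j ∈ bcS W 1, ∑ i ∈ bcS W 0, if i < j then 1 else 0)
        = ∑ i ∈ bcS W 0, ∑ j ∈ bcS W 1, if i < j then 1 else 0 from Finset.sum_comm,
      ← Finset.sum_add_distrib]
    have : ∀ i ∈ bcS W 0,
        ((∑ j ∈ bcS W 1, if j < i then 1 else 0) +
         (∑ j ∈ bcS W 1, if i < j then 1 else 0)) = (bcS W 1).card := by
      intro i hi
      rw [← Finset.sum_add_distrib]
      have : ∀ j ∈ bcS W 1,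
          ((if j < i then 1 else 0) + (if i < j then 1 else 0) : ℕ) = 1 := by
        intro j hj
        have := hmem i hi j hj
        split_ifs <;> omega
      rw [Finset.sum_congr rfl this, Finset.sum_const, smul_eq_mul, mul_one]
    rw [Finset.sum_congr rfl this, Finset.sum_const, smul_eq_mul]
  have hmul : (bcS W 0).card * (bcS W 1).card % 2 = 0 := by
    rw [Nat.mul_mod, hcard1, h, mul_zero]; rfl
  omega
end
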